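/- arXiv:2510.11935 — 11 statements merged into one kernel-verified Lean document; each statement's English description precedes it below -/
import Mathlib

section
/- The topological space (A, τ_A[Z]) is zero-dimensional and Hausdorff. -/
open Set

/-- The basic set `B_{x,z} = {y ∈ A : x ⊆ y ⊆ X \\ z}`. -/
def BSet {X : Type*} (A : Set (Set X)) (x z : Set X) : Set ↥A :=
  {y : ↥A | x ⊆ (y : Set X) ∧ (y : Set X) ∩ z = ∅}

/-- The topology `τ_A[Z]` on `A`, generated by the sets `B_{x,z}` for `x ∈ A`,
`z ∈ Z` with `x ∩ z = ∅`. -/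
def tau {X : Type*} (A Z : Set (Set X)) : TopologicalSpace ↥A :=
  TopologicalSpace.generateFrom
    {S | ∃ x ∈ A, ∃ z ∈ Z, x ∩ z = ∅ ∧ S = BSet A x z}

/-- The space `(A, τ_A[Z])` is zero-dimensional (the clopen sets form a basis)
and Hausdorff. -/
theorem tau_zeroDim_T2 {X : Type*} [Infinite X] (A Z : Set (Set X))
    (hA : A.Nonempty)
    (hZfin : ∀ s : Set X, s.Finite → s ∈ Z)
    (hZun : ∀ s ∈ Z, ∀ t ∈ Z, s ∪ t ∈ Z)
    [t : TopologicalSpace ↥A] (ht : t = tau A Z) :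
    TopologicalSpace.IsTopologicalBasis {s : Set ↥A | IsClopen s} ∧ T2Space ↥A := by
  set S : Set (Set ↥A) := {S | ∃ x ∈ A, ∃ z ∈ Z, x ∩ z = ∅ ∧ S = BSet A x z} with hSdef
  have hmemB : ∀ (p : ↥A) (z : Set X), z ∈ Z → (p : Set X) ∩ z = ∅ →
      BSet A (p : Set X) z ∈ S := fun p z hz hpz => ⟨p, p.2, z, hz, hpz, rfl⟩
  -- S is a basis
  have basisS : TopologicalSpace.IsTopologicalBasis S := by
    refine ⟨?_, ?_, ht⟩
    · rintro t1 ⟨x, hx, z, hz, hxz, rfl⟩ t2 ⟨x', hx', z', hz', hxz', rfl⟩ p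
        ⟨⟨hxp, hpz⟩, ⟨hx'p, hpz'⟩⟩
      have hpu : (p : Set X) ∩ (z ∪ z') = ∅ := by
        rw [inter_union_distrib_left, hpz, hpz', union_empty]
      refine ⟨BSet A p (z ∪ z'), hmemB p _ (hZun z hz z' hz') hpu,
        ⟨Subset.rfl, hpu⟩, ?_⟩
      rintro y ⟨hpy, hyu⟩
      have h1 : (y : Set X) ∩ z = ∅ :=
        eq_empty_of_subset_empty (hyu ▸ inter_subset_inter_right _ subset_union_left)
      have h2 : (y : Set X) ∩ z' = ∅ :=
        eq_empty_of_subset_empty (hyu ▸ inter_subset_inter_right _ subset_union_right)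
      exact ⟨⟨hxp.trans hpy, h1⟩, ⟨hx'p.trans hpy, h2⟩⟩
    · apply eq_univ_of_univ_subset
      rintro p -
      exact mem_sUnion.mpr ⟨BSet A p ∅, hmemB p ∅ (hZfin ∅ finite_empty) (inter_empty _),
        Subset.rfl, inter_empty _⟩
  -- every member of S is clopen
  have hclopen : ∀ s ∈ S, IsClopen s := by
    rintro s hs
    obtain ⟨x, hx, z, hz, hxz, rfl⟩ := hs
    refine ⟨?_, basisS.isOpen ⟨x, hx, z, hz, hxz, rfl⟩⟩
    -- closed: complement is open
    rw [← isOpen_compl_iff]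
    rw [basisS.isOpen_iff]
    rintro p hp
    simp only [BSet, mem_compl_iff, mem_setOf_eq, not_and] at hp
    by_cases hxp : x ⊆ (p : Set X)
    · -- then p ∩ z ≠ ∅, pick b ∈ p ∩ z
      have hne : (p : Set X) ∩ z ≠ ∅ := hp hxp
      refine ⟨BSet A p ∅, hmemB p ∅ (hZfin ∅ finite_empty) (inter_empty _),
        ⟨Subset.rfl, inter_empty _⟩, ?_⟩
      rintro y ⟨hpy, -⟩
      simp only [BSet, mem_compl_iff, mem_setOf_eq, not_and]
      intro hxy
      intro hy
      apply hne
      exact eq_empty_of_subset_empty (hy ▸ inter_subset_inter_left _ hpy)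
    · -- pick a ∈ x \ p
      obtain ⟨a, hax, hap⟩ := not_subset.mp hxp
      have hpa : (p : Set X) ∩ {a} = ∅ := by
        ext b; simp only [mem_inter_iff, mem_singleton_iff, mem_empty_iff_false, iff_false,
          not_and]
        rintro hb rfl; exact hap hb
      refine ⟨BSet A p {a}, hmemB p {a} (hZfin _ (finite_singleton a)) hpa,
        ⟨Subset.rfl, hpa⟩, ?_⟩
      rintro y ⟨hpy, hya⟩
      simp only [BSet, mem_compl_iff, mem_setOf_eq, not_and]
      intro hxy
      exact absurd (eq_empty_iff_forall_notMem.mp hya a) (by simp [hxy hax])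
  constructor
  · -- clopen sets form a basis
    refine TopologicalSpace.isTopologicalBasis_of_isOpen_of_nhds
      (fun u hu => hu.2) ?_
    intro a u hau hu
    obtain ⟨v, hvS, hav, hvu⟩ := basisS.exists_subset_of_mem_open hau hu
    exact ⟨v, hclopen v hvS, hav, hvu⟩
  · -- Hausdorff
    refine ⟨fun p q hpq => ?_⟩
    have hne : (p : Set X) ≠ (q : Set X) := fun h => hpq (Subtype.ext h)
    have : ∃ a, (a ∈ (p : Set X) ∧ a ∉ (q : Set X)) ∨ (a ∈ (q : Set X) ∧ a ∉ (p : Set X)) := by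
      by_contra h
      push_neg at h
      apply hne
      ext a
      have := h a
      tauto
    obtain ⟨a, ha⟩ := this
    rcases ha with ⟨hap, haq⟩ | ⟨haq, hap⟩
    · have hqa : (q : Set X) ∩ {a} = ∅ := by
        ext b; simp only [mem_inter_iff, mem_singleton_iff, mem_empty_iff_false, iff_false,
          not_and]
        rintro hb rfl; exact haq hb
      refine ⟨BSet A p ∅, BSet A q {a},
        (hclopen _ (hmemB p ∅ (hZfin ∅ finite_empty) (inter_empty _))).2,
        (hclopen _ (hmemB q {a} (hZfin _ (finite_singleton a)) hqa)).2,
        ⟨Subset.rfl, inter_empty _⟩, ⟨Subset.rfl, hqa⟩, ?_⟩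
      rw [disjoint_left]
      rintro y ⟨hpy, -⟩ ⟨hqy, hya⟩
      exact absurd (eq_empty_iff_forall_notMem.mp hya a) (by simp [hpy hap])
    · have hpa : (p : Set X) ∩ {a} = ∅ := by
        ext b; simp only [mem_inter_iff, mem_singleton_iff, mem_empty_iff_false, iff_false,
          not_and]
        rintro hb rfl; exact hap hb
      refine ⟨BSet A p {a}, BSet A q ∅,
        (hclopen _ (hmemB p {a} (hZfin _ (finite_singleton a)) hpa)).2,
        (hclopen _ (hmemB q ∅ (hZfin ∅ finite_empty) (inter_empty _))).2,
        ⟨Subset.rfl, hpa⟩, ⟨Subset.rfl, inter_empty _⟩, ?_⟩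
      rw [disjoint_left]
      rintro y ⟨hpy, hya⟩ ⟨hqy, -⟩
      exact absurd (eq_empty_iff_forall_notMem.mp hya a) (by simp [hqy haq])
end

section
/- Suppose A is closed under finite unions and contains all finite subsets of X. Then a point x ∈ A is isolated in (A, τ_A[Z]) if and only if X \ x ∈ Z. -/
open Set

theorem BSet_inter {X : Type*} (A : Set (Set X)) (x1 z1 x2 z2 : Set X) :
    BSet A x1 z1 ∩ BSet A x2 z2 = BSet A (x1 ∪ x2) (z1 ∪ z2) := by
  ext y
  simp only [BSet, mem_inter_iff, mem_setOf_eq, union_subset_iff, inter_union_distrib_left,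
    union_empty_iff]
  tauto

theorem tau_key {X : Type*} (A Z : Set (Set X))
    (hZfin : ∀ s : Set X, s.Finite → s ∈ Z)
    (hZun : ∀ s ∈ Z, ∀ t ∈ Z, s ∪ t ∈ Z)
    (hAun : ∀ s ∈ A, ∀ t ∈ A, s ∪ t ∈ A)
    (U : Set ↥A)
    (hU : TopologicalSpace.GenerateOpen
      {S | ∃ x ∈ A, ∃ z ∈ Z, x ∩ z = ∅ ∧ S = BSet A x z} U) :
    ∀ y ∈ U, ∃ x' ∈ A, ∃ z ∈ Z, y ∈ BSet A x' z ∧ BSet A x' z ⊆ U := by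
  induction hU with
  | basic S hS =>
    obtain ⟨x', hx', z, hz, _, rfl⟩ := hS
    exact fun y hy => ⟨x', hx', z, hz, hy, subset_rfl⟩
  | univ =>
    intro y _
    refine ⟨(y : Set X), y.2, ∅, hZfin ∅ finite_empty, ⟨subset_rfl, inter_empty _⟩,
      subset_univ _⟩
  | inter U1 U2 _ _ ih1 ih2 =>
    intro y hy
    obtain ⟨x1, hx1, z1, hz1, hy1, hs1⟩ := ih1 y hy.1
    obtain ⟨x2, hx2, z2, hz2, hy2, hs2⟩ := ih2 y hy.2
    refine ⟨x1 ∪ x2, hAun _ hx1 _ hx2, z1 ∪ z2, hZun _ hz1 _ hz2, ?_, ?_⟩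
    · rw [← BSet_inter]; exact ⟨hy1, hy2⟩
    · rw [← BSet_inter]; exact fun w hw => ⟨hs1 hw.1, hs2 hw.2⟩
  | sUnion S _ ih =>
    intro y hy
    obtain ⟨U, hUS, hyU⟩ := hy
    obtain ⟨x', hx', z, hz, hyB, hB⟩ := ih U hUS y hyU
    exact ⟨x', hx', z, hz, hyB, hB.trans (subset_sUnion_of_mem hUS)⟩

/-- If `A` contains all finite subsets of `X` and is closed under finite unions,
then `x ∈ A` is an isolated point of `(A, τ_A[Z])` iff `X \ x ∈ Z`. -/
theorem tau_isolated_iff {X : Type*} [Infinite X] (A Z : Set (Set X))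
    (hZfin : ∀ s : Set X, s.Finite → s ∈ Z)
    (hZun : ∀ s ∈ Z, ∀ t ∈ Z, s ∪ t ∈ Z)
    (hAfin : ∀ s : Set X, s.Finite → s ∈ A)
    (hAun : ∀ s ∈ A, ∀ t ∈ A, s ∪ t ∈ A)
    [t : TopologicalSpace ↥A] (ht : t = tau A Z) (x : ↥A) :
    IsOpen ({x} : Set ↥A) ↔ (x : Set X)ᶜ ∈ Z := by
  subst ht
  constructor
  · intro hopen
    have hgen : TopologicalSpace.GenerateOpen
        {S | ∃ x ∈ A, ∃ z ∈ Z, x ∩ z = ∅ ∧ S = BSet A x z} ({x} : Set ↥A) := hopen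
    obtain ⟨x', hx', z, hz, hxB, hB⟩ :=
      tau_key A Z hZfin hZun hAun _ hgen x rfl
    -- show xᶜ = z
    have hxz : (x : Set X) ∩ z = ∅ := hxB.2
    have h1 : z ⊆ (x : Set X)ᶜ := by
      intro a ha hax
      exact eq_empty_iff_forall_notMem.mp hxz a ⟨hax, ha⟩
    have h2 : (x : Set X)ᶜ ⊆ z := by
      intro a ha
      by_contra haz
      -- consider y = x ∪ {a}
      have hyA : (x : Set X) ∪ {a} ∈ A := hAun _ x.2 _ (hAfin _ (finite_singleton a))
      have hyB : (⟨_, hyA⟩ : ↥A) ∈ BSet A x' z := by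
        refine ⟨hxB.1.trans subset_union_left, ?_⟩
        rw [union_inter_distrib_right, hxz, empty_union]
        simp only [singleton_inter_eq_empty]
        exact haz
      have := hB hyB
      rw [mem_singleton_iff] at this
      have : (x : Set X) ∪ {a} = (x : Set X) := congrArg Subtype.val this
      exact ha (this ▸ (subset_union_right (mem_singleton a)))
    exact (Subset.antisymm h2 h1) ▸ hz
  · intro hz
    have : ({x} : Set ↥A) = BSet A (x : Set X) (x : Set X)ᶜ := by
      ext y
      simp only [mem_singleton_iff, BSet, mem_setOf_eq, inter_compl_self]
      constructor
      · rintro rfl; exact ⟨subset_rfl, by simp [inter_compl_self]⟩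
      · rintro ⟨h1, h2⟩
        have : (y : Set X) ⊆ (x : Set X) := by
          intro a ha
          by_contra hax
          exact eq_empty_iff_forall_notMem.mp h2 a ⟨ha, hax⟩
        exact Subtype.ext (Subset.antisymm this h1)
    rw [this]
    exact TopologicalSpace.GenerateOpen.basic _
      ⟨(x : Set X), x.2, (x : Set X)ᶜ, hz, inter_compl_self _, rfl⟩
end

section
/- Suppose A is closed under finite unions and [X]^{<ω} ⊆ A ⊆ Z. Then the space (A, τ_A[Z]) is crowded (has no isolated points) if and only if X ∉ Z. -/
open Set

/-!
If `X ∈ Z`, then `{∅} = B_{∅,X}` is open. Conversely, every neighbourhood of `y` contains a set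
`B_{y,c}` with `c ∈ Z`, because `B_{y,c} ∩ B_{y,c'} = B_{y,c ∪ c'}`. As `y ∪ c ∈ Z`, it is not
`X` when `X ∉ Z`, and adding a point outside it to `y` gives a second element of `B_{y,c}`.
-/

open Topology

namespace BSet

variable {X : Type*} {A Z : Set (Set X)}

theorem subset_of_mem {x z : Set X} {y : ↥A} (hy : y ∈ BSet A x z) :
    BSet A (y : Set X) z ⊆ BSet A x z :=
  fun _ hw => ⟨hy.1.trans hw.1, hw.2⟩

theorem empty_univ_eq_singleton (h₀ : ∅ ∈ A) :
    BSet A ∅ univ = {(⟨∅, h₀⟩ : ↥A)} := by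
  ext w
  simp [BSet, Subtype.ext_iff]

theorem isOpen {x z : Set X} (hx : x ∈ A) (hz : z ∈ Z) (hxz : x ∩ z = ∅) :
    IsOpen[tau A Z] (BSet A x z) :=
  TopologicalSpace.isOpen_generateFrom_of_mem ⟨x, hx, z, hz, hxz, rfl⟩

theorem exists_subset_of_isOpen (hZ₀ : ∅ ∈ Z) (hZun : ∀ s ∈ Z, ∀ t ∈ Z, s ∪ t ∈ Z)
    {U : Set ↥A} (hU : IsOpen[tau A Z] U) {y : ↥A} (hy : y ∈ U) :
    ∃ c ∈ Z, (y : Set X) ∩ c = ∅ ∧ BSet A y c ⊆ U := by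
  induction hU with
  | basic U hU =>
    obtain ⟨x, -, z, hz, -, rfl⟩ := hU
    exact ⟨z, hz, hy.2, subset_of_mem hy⟩
  | univ => exact ⟨∅, hZ₀, inter_empty _, subset_univ _⟩
  | inter U V _ _ ihU ihV =>
    obtain ⟨c, hc, hyc, hcU⟩ := ihU hy.1
    obtain ⟨d, hd, hyd, hdV⟩ := ihV hy.2
    refine ⟨c ∪ d, hZun c hc d hd, by rw [inter_union_distrib_left, hyc, hyd, union_self], ?_⟩
    rintro w ⟨hyw, hw⟩
    rw [inter_union_distrib_left, union_empty_iff] at hw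
    exact ⟨hcU ⟨hyw, hw.1⟩, hdV ⟨hyw, hw.2⟩⟩
  | sUnion S _ ih =>
    obtain ⟨U, hUS, hyU⟩ := mem_sUnion.mp hy
    obtain ⟨c, hc, hyc, hcU⟩ := ih U hUS hyU
    exact ⟨c, hc, hyc, hcU.trans (subset_sUnion_of_mem hUS)⟩

theorem exists_ne_mem (hA₁ : ∀ p : X, {p} ∈ A) (hAun : ∀ s ∈ A, ∀ t ∈ A, s ∪ t ∈ A)
    {y : ↥A} {c : Set X} (hyc : (y : Set X) ∩ c = ∅) (hne : (y : Set X) ∪ c ≠ univ) :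
    ∃ w ∈ BSet A y c, w ≠ y := by
  obtain ⟨p, hp⟩ := (ne_univ_iff_exists_notMem _).mp hne
  rw [mem_union, not_or] at hp
  refine ⟨⟨y ∪ {p}, hAun _ y.2 _ (hA₁ p)⟩, ⟨subset_union_left, ?_⟩, fun h => hp.1 ?_⟩
  · rw [union_inter_distrib_right, hyc, empty_union, singleton_inter_eq_empty]
    exact hp.2
  · rw [← h]
    exact mem_union_right _ rfl

end BSet

theorem tau_crowded_iff_general {X : Type*} (A Z : Set (Set X))
    (hZfin : ∀ s : Set X, s.Finite → s ∈ Z)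
    (hZun : ∀ s ∈ Z, ∀ t ∈ Z, s ∪ t ∈ Z)
    (hAfin : ∀ s : Set X, s.Finite → s ∈ A)
    (hAun : ∀ s ∈ A, ∀ t ∈ A, s ∪ t ∈ A)
    (hAZ : A ⊆ Z)
    [t : TopologicalSpace ↥A] (ht : t = tau A Z) :
    (∀ x : ↥A, ¬ IsOpen ({x} : Set ↥A)) ↔ (Set.univ : Set X) ∉ Z := by
  subst ht
  have hA₀ : ∅ ∈ A := hAfin ∅ finite_empty
  constructor
  · intro hcrowded hX
    apply hcrowded ⟨∅, hA₀⟩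
    rw [← BSet.empty_univ_eq_singleton hA₀]
    exact BSet.isOpen hA₀ hX (empty_inter _)
  · intro hX y hy
    obtain ⟨c, hc, hyc, hcy⟩ :=
      BSet.exists_subset_of_isOpen (hZfin ∅ finite_empty) hZun hy (mem_singleton y)
    have hne : (y : Set X) ∪ c ≠ univ := fun h => hX (h ▸ hZun _ (hAZ y.2) c hc)
    obtain ⟨w, hw, hwy⟩ :=
      BSet.exists_ne_mem (fun p => hAfin _ (finite_singleton p)) hAun hyc hne
    exact hwy (hcy hw)

/-- If `A` is closed under finite unions and `[X]^{<ω} ⊆ A ⊆ Z`, then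
`(A, τ_A[Z])` is crowded (has no isolated points) iff `X ∉ Z`. -/
theorem tau_crowded_iff {X : Type*} [Infinite X] (A Z : Set (Set X))
    (hZfin : ∀ s : Set X, s.Finite → s ∈ Z)
    (hZun : ∀ s ∈ Z, ∀ t ∈ Z, s ∪ t ∈ Z)
    (hAfin : ∀ s : Set X, s.Finite → s ∈ A)
    (hAun : ∀ s ∈ A, ∀ t ∈ A, s ∪ t ∈ A)
    (hAZ : A ⊆ Z)
    [t : TopologicalSpace ↥A] (ht : t = tau A Z) :
    (∀ x : ↥A, ¬ IsOpen ({x} : Set ↥A)) ↔ (Set.univ : Set X) ∉ Z :=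
  tau_crowded_iff_general A Z hZfin hZun hAfin hAun hAZ (t := t) ht
end

section
/- If Z and A are bornologies on X with A ⊆ Z, then the space (A, τ_A[Z]) is homogeneous: for any two points x₁, x₂ ∈ A there is a self-homeomorphism of (A, τ_A[Z]) sending x₁ to x₂. -/
open Set

lemma mem_BSet_iff' {X : Type*} (A : Set (Set X)) (x z : Set X) (y : ↥A) :
    y ∈ BSet A x z ↔ ∀ a, (a ∈ x → a ∈ (y : Set X)) ∧ (a ∈ z → a ∉ (y : Set X)) := by
  constructor
  · rintro ⟨h1, h2⟩ a
    refine ⟨fun ha => h1 ha, fun ha hy => ?_⟩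
    exact (Set.eq_empty_iff_forall_notMem.1 h2 a) ⟨hy, ha⟩
  · intro h
    refine ⟨fun a ha => (h a).1 ha, Set.eq_empty_iff_forall_notMem.2 ?_⟩
    rintro a ⟨hy, hz⟩
    exact (h a).2 hz hy

/-- If `Z` and `A` are bornologies on `X` with `A ⊆ Z`, then `(A, τ_A[Z])` is
homogeneous: any point can be mapped to any other by a self-homeomorphism. -/
theorem tau_homogeneous {X : Type*} [Infinite X] (A Z : Set (Set X))
    (hZfin : ∀ s : Set X, s.Finite → s ∈ Z)
    (hZdown : ∀ s t : Set X, s ⊆ t → t ∈ Z → s ∈ Z)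
    (hZun : ∀ s ∈ Z, ∀ t ∈ Z, s ∪ t ∈ Z)
    (hAfin : ∀ s : Set X, s.Finite → s ∈ A)
    (hAdown : ∀ s t : Set X, s ⊆ t → t ∈ A → s ∈ A)
    (hAun : ∀ s ∈ A, ∀ t ∈ A, s ∪ t ∈ A)
    (hAZ : A ⊆ Z)
    [t : TopologicalSpace ↥A] (ht : t = tau A Z) :
    ∀ x₁ x₂ : ↥A, ∃ h : ↥A ≃ₜ ↥A, h x₁ = x₂ := by
  intro x₁ x₂
  set d : Set X := symmDiff (x₁ : Set X) (x₂ : Set X) with hd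
  have hdA : d ∈ A :=
    hAdown _ _ symmDiff_le_sup (hAun _ x₁.2 _ x₂.2)
  have hmem : ∀ y : ↥A, symmDiff (y : Set X) d ∈ A := fun y =>
    hAdown _ _ symmDiff_le_sup (hAun _ y.2 _ hdA)
  set f : ↥A → ↥A := fun y => ⟨symmDiff (y : Set X) d, hmem y⟩ with hf
  have hinv : ∀ y, f (f y) = y := by
    intro y
    apply Subtype.ext
    simp only [hf]
    exact symmDiff_symmDiff_cancel_right _ _
  have hcont : Continuous f := by
    rw [ht]
    apply continuous_generateFrom_iff.2
    rintro S ⟨x, hxA, z, hzZ, hxz, rfl⟩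
    have key : f ⁻¹' (BSet A x z) = BSet A ((x \ d) ∪ (z ∩ d)) ((x ∩ d) ∪ (z \ d)) := by
      ext y
      simp only [Set.mem_preimage, mem_BSet_iff', hf]
      constructor
      · intro h a
        have := h a
        simp only [Set.mem_symmDiff] at this
        constructor
        · rintro (⟨hax, had⟩ | ⟨haz, had⟩)
          · rcases this.1 hax with h' | h'
            · exact h'.1
            · exact absurd h'.1 had
          · by_contra hay
            exact this.2 haz (Or.inr ⟨had, hay⟩)
        · rintro (⟨hax, had⟩ | ⟨haz, had⟩) hay
          · rcases this.1 hax with h' | h'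
            · exact h'.2 had
            · exact h'.2 hay
          · exact this.2 haz (Or.inl ⟨hay, had⟩)
      · intro h a
        have := h a
        simp only [Set.mem_symmDiff]
        constructor
        · intro hax
          by_cases had : a ∈ d
          · exact Or.inr ⟨had, this.2 (Or.inl ⟨hax, had⟩)⟩
          · exact Or.inl ⟨this.1 (Or.inl ⟨hax, had⟩), had⟩
        · intro haz hsym
          rcases hsym with ⟨hay, had⟩ | ⟨had, hay⟩
          · exact this.2 (Or.inr ⟨haz, had⟩) hay
          · exact hay (this.1 (Or.inr ⟨haz, had⟩))
    rw [key]
    apply TopologicalSpace.isOpen_generateFrom_of_mem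
    refine ⟨_, hAdown _ _ (Set.union_subset (Set.diff_subset.trans Set.subset_union_left)
      (Set.inter_subset_right.trans Set.subset_union_right)) (hAun _ hxA _ hdA), _,
      hZun _ (hZdown _ _ Set.inter_subset_left (hAZ hxA)) _ (hZdown _ _ Set.diff_subset hzZ), ?_, rfl⟩
    ext a
    simp only [Set.mem_inter_iff, Set.mem_union, Set.mem_diff, Set.mem_empty_iff_false, iff_false]
    rintro ⟨h1 | h1, h2 | h2⟩
    · exact h1.2 h2.2
    · exact Set.eq_empty_iff_forall_notMem.1 hxz a ⟨h1.1, h2.1⟩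
    · exact Set.eq_empty_iff_forall_notMem.1 hxz a ⟨h2.1, h1.1⟩
    · exact h2.2 h1.2
  refine ⟨⟨⟨f, f, hinv, hinv⟩, hcont, hcont⟩, ?_⟩
  apply Subtype.ext
  show symmDiff (x₁ : Set X) d = (x₂ : Set X)
  rw [hd]
  exact symmDiff_symmDiff_cancel_left _ _
end

section
/- Let Z be a bornology on X, and let A ⊆ P(X) contain the empty set and all singletons of X. If the space (A, τ_A[Z]) is a P-space, then Z is a σ-ideal (closed under countable unions). -/
open Set

/-- A topology `t` is a P-space topology if every countable intersection of open
sets is open. -/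
def IsPSpace {α : Type*} (t : TopologicalSpace α) : Prop :=
  ∀ U : ℕ → Set α, (∀ n, t.IsOpen (U n)) → t.IsOpen (⋂ n, U n)
/-- If `Z` is a bornology on `X`, `A` contains `∅` and all singletons, and
`(A, τ_A[Z])` is a P-space, then `Z` is a σ-ideal. -/
theorem sigma_ideal_of_isPSpace {X : Type*} [Infinite X] (A Z : Set (Set X))
    (hZfin : ∀ s : Set X, s.Finite → s ∈ Z)
    (hZdown : ∀ s t : Set X, s ⊆ t → t ∈ Z → s ∈ Z)
    (hZun : ∀ s ∈ Z, ∀ t ∈ Z, s ∪ t ∈ Z)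
    (hempty : (∅ : Set X) ∈ A)
    (hsing : ∀ a : X, ({a} : Set X) ∈ A)
    (hP : IsPSpace (tau A Z)) :
    ∀ f : ℕ → Set X, (∀ n, f n ∈ Z) → (⋃ n, f n) ∈ Z := by
  intro f hf
  set e : ↥A := ⟨∅, hempty⟩ with he
  -- Key lemma: any open set containing ∅ contains some BSet A ∅ z with z ∈ Z.
  have key : ∀ U : Set ↥A, (tau A Z).IsOpen U → e ∈ U →
      ∃ z ∈ Z, BSet A ∅ z ⊆ U := by
    intro U hU
    induction hU with
    | basic S hS =>
      intro heS
      obtain ⟨x, hxA, z, hzZ, hxz, rfl⟩ := hS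
      have hx : x = ∅ := subset_empty_iff.mp heS.1
      exact ⟨z, hzZ, by simp [hx, subset_rfl]⟩
    | univ => exact fun _ => ⟨∅, hZfin ∅ finite_empty, fun _ _ => trivial⟩
    | inter S T _ _ ihS ihT =>
      intro hST
      obtain ⟨z1, hz1, h1⟩ := ihS hST.1
      obtain ⟨z2, hz2, h2⟩ := ihT hST.2
      refine ⟨z1 ∪ z2, hZun z1 hz1 z2 hz2, fun y hy => ?_⟩
      have h1' : (y : Set X) ∩ z1 = ∅ := by
        apply subset_empty_iff.mp; rw [← hy.2]
        exact inter_subset_inter_right _ subset_union_left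
      have h2' : (y : Set X) ∩ z2 = ∅ := by
        apply subset_empty_iff.mp; rw [← hy.2]
        exact inter_subset_inter_right _ subset_union_right
      exact ⟨h1 ⟨hy.1, h1'⟩, h2 ⟨hy.1, h2'⟩⟩
    | sUnion S _ ih =>
      intro hS
      obtain ⟨T, hTS, heT⟩ := hS
      obtain ⟨z, hz, h⟩ := ih T hTS heT
      exact ⟨z, hz, fun y hy => ⟨T, hTS, h hy⟩⟩
  -- Each BSet A ∅ (f n) is open and contains ∅.
  have hopen : ∀ n, (tau A Z).IsOpen (BSet A ∅ (f n)) := fun n =>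
    TopologicalSpace.GenerateOpen.basic _ ⟨∅, hempty, f n, hf n, by simp, rfl⟩
  have hIopen := hP _ hopen
  have heI : e ∈ ⋂ n, BSet A ∅ (f n) := by
    refine mem_iInter.mpr fun n => ⟨subset_rfl, by simp [he]⟩
  obtain ⟨z, hzZ, hsub⟩ := key _ hIopen heI
  refine hZdown _ _ (fun a ha => ?_) hzZ
  obtain ⟨n, han⟩ := mem_iUnion.mp ha
  by_contra haz
  have : (⟨{a}, hsing a⟩ : ↥A) ∈ ⋂ n, BSet A ∅ (f n) := by
    apply hsub
    exact ⟨empty_subset _, by simpa [singleton_inter_eq_empty] using haz⟩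
  have := (mem_iInter.mp this n).2
  rw [singleton_inter_eq_empty] at this
  exact this han
end

section
/- If Z is a bornology on X, then the space (P(X), τ_P[Z]) is a P-space if and only if ∅ is a P-point of (P(X), τ_P[Z]) (i.e., every countable intersection of open sets containing ∅ contains an open neighborhood of ∅). -/
open Set

/-- The topology `τ_P[Z]` on the full power set `P(X)`, generated by the sets
`B_{x,z} = {y : x ⊆ y ⊆ X \ z}` for `z ∈ Z` with `x ∩ z = ∅`. -/
def tauP {X : Type*} (Z : Set (Set X)) : TopologicalSpace (Set X) :=
  TopologicalSpace.generateFrom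
    {S | ∃ x z : Set X, z ∈ Z ∧ x ∩ z = ∅ ∧ S = {y : Set X | x ⊆ y ∧ y ∩ z = ∅}}

/-- Every open set of `τ_P[Z]` containing `y` contains the basic set `B_{y,z}`
for some `z ∈ Z` disjoint from `y`. -/
lemma tauP_mem_basic {X : Type*} {Z : Set (Set X)}
    (hZfin : ∀ s : Set X, s.Finite → s ∈ Z)
    (hZun : ∀ s ∈ Z, ∀ t ∈ Z, s ∪ t ∈ Z) {S : Set (Set X)}
    (hS : (tauP Z).IsOpen S) {y : Set X} :
    y ∈ S → ∃ z ∈ Z, y ∩ z = ∅ ∧ {w : Set X | y ⊆ w ∧ w ∩ z = ∅} ⊆ S := by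
  have hS' : TopologicalSpace.GenerateOpen
      {S | ∃ x z : Set X, z ∈ Z ∧ x ∩ z = ∅ ∧ S = {y : Set X | x ⊆ y ∧ y ∩ z = ∅}} S := hS
  clear hS
  induction hS' with
  | basic s hs =>
    intro hy
    obtain ⟨x, z, hz, hxz, rfl⟩ := hs
    exact ⟨z, hz, hy.2, fun w hw => ⟨hy.1.trans hw.1, hw.2⟩⟩
  | univ =>
    intro _
    exact ⟨∅, hZfin ∅ finite_empty, inter_empty y, fun w _ => trivial⟩
  | inter s t hso hto ihs iht =>
    intro hy
    obtain ⟨z1, hz1, hyz1, h1⟩ := ihs hy.1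
    obtain ⟨z2, hz2, hyz2, h2⟩ := iht hy.2
    refine ⟨z1 ∪ z2, hZun _ hz1 _ hz2, by rw [inter_union_distrib_left, hyz1, hyz2, union_empty],
      fun w hw => ?_⟩
    have hw1 : w ∩ z1 = ∅ := by
      apply subset_empty_iff.mp
      rw [← hw.2]; exact inter_subset_inter_right w subset_union_left
    have hw2 : w ∩ z2 = ∅ := by
      apply subset_empty_iff.mp
      rw [← hw.2]; exact inter_subset_inter_right w subset_union_right
    exact ⟨h1 ⟨hw.1, hw1⟩, h2 ⟨hw.1, hw2⟩⟩
  | sUnion K hK ih =>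
    intro hy
    obtain ⟨s, hsK, hys⟩ := hy
    obtain ⟨z, hz, hyz, h⟩ := ih s hsK hys
    exact ⟨z, hz, hyz, fun w hw => ⟨s, hsK, h hw⟩⟩

/-- If `Z` is a bornology on `X`, then `(P(X), τ_P[Z])` is a P-space iff `∅` is a
P-point of `(P(X), τ_P[Z])`. -/
theorem tauP_isPSpace_iff_empty_Ppoint {X : Type*} [Infinite X] (Z : Set (Set X))
    (hZfin : ∀ s : Set X, s.Finite → s ∈ Z)
    (hZdown : ∀ s t : Set X, s ⊆ t → t ∈ Z → s ∈ Z)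
    (hZun : ∀ s ∈ Z, ∀ t ∈ Z, s ∪ t ∈ Z) :
    IsPSpace (tauP Z) ↔
      ∀ U : ℕ → Set (Set X), (∀ n, (tauP Z).IsOpen (U n)) →
        (∅ : Set X) ∈ ⋂ n, U n →
        ∃ V : Set (Set X), (tauP Z).IsOpen V ∧ (∅ : Set X) ∈ V ∧ V ⊆ ⋂ n, U n := by
  constructor
  · intro h U hU h0
    exact ⟨⋂ n, U n, h U hU, h0, subset_rfl⟩
  · intro hpp U hU
    letI := tauP Z
    rw [show (tauP Z).IsOpen (⋂ n, U n) = IsOpen (⋂ n, U n) from rfl,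
      isOpen_iff_forall_mem_open]
    intro y hy
    -- choose basic neighborhoods of y inside each U n
    have hb : ∀ n, ∃ z ∈ Z, y ∩ z = ∅ ∧ {w : Set X | y ⊆ w ∧ w ∩ z = ∅} ⊆ U n := by
      intro n
      exact tauP_mem_basic hZfin hZun (hU n) (mem_iInter.mp hy n)
    choose zf hzf hyzf hsub using hb
    -- neighborhoods of ∅
    set W : ℕ → Set (Set X) := fun n => {w : Set X | (∅ : Set X) ⊆ w ∧ w ∩ zf n = ∅} with hW
    have hWopen : ∀ n, (tauP Z).IsOpen (W n) := by
      intro n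
      exact TopologicalSpace.GenerateOpen.basic _
        ⟨∅, zf n, hzf n, empty_inter _, rfl⟩
    have hW0 : (∅ : Set X) ∈ ⋂ n, W n :=
      mem_iInter.mpr fun n => ⟨subset_rfl, empty_inter _⟩
    obtain ⟨V, hVopen, hV0, hVsub⟩ := hpp W hWopen hW0
    obtain ⟨z, hz, -, hzV⟩ := tauP_mem_basic hZfin hZun hVopen hV0
    -- all zf n ⊆ z
    have hzfz : ∀ n, zf n ⊆ z := by
      intro n p hp
      by_contra hpz
      have h1 : ({p} : Set X) ∈ {w : Set X | (∅ : Set X) ⊆ w ∧ w ∩ z = ∅} :=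
        ⟨empty_subset _, by simp [singleton_inter_eq_empty.mpr hpz]⟩
      have h2 := mem_iInter.mp (hVsub (hzV h1)) n
      have : p ∈ ({p} : Set X) ∩ zf n := ⟨rfl, hp⟩
      rw [h2.2] at this
      exact this
    -- the basic neighborhood of y
    refine ⟨{w : Set X | y ⊆ w ∧ w ∩ (z \ y) = ∅}, fun w hw => ?_, ?_, ?_⟩
    · refine mem_iInter.mpr fun n => hsub n ⟨hw.1, ?_⟩
      apply subset_empty_iff.mp
      rw [← hw.2]
      refine inter_subset_inter_right w fun p hp => ⟨hzfz n hp, fun hpy => ?_⟩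
      have : p ∈ y ∩ zf n := ⟨hpy, hp⟩
      rw [hyzf n] at this
      exact this
    · exact TopologicalSpace.GenerateOpen.basic _
        ⟨y, z \ y, hZdown _ _ diff_subset hz, inter_diff_self y z, rfl⟩
    · exact ⟨subset_rfl, inter_diff_self y z⟩
end

section
/- Suppose Z and A are bornologies on X with either A ⊆ Z or A = P(X). Then (A, τ_A[Z]) is a P-space if and only if for every sequence (A_n)_{n∈ω} of non-empty subfamilies of A \ {∅} such that for each n the set C_n = {z ∈ Z : ∀ x ∈ A_n, x ∩ z ≠ ∅} is non-empty, the intersection ⋂_{n∈ω} C_n is non-empty. -/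
open Set

/-- Characterization of open sets in `tau`. -/
lemma isOpen_tau_iff {X : Type*} (A Z : Set (Set X))
    (hZfin : ∀ s : Set X, s.Finite → s ∈ Z)
    (hZun : ∀ s ∈ Z, ∀ t ∈ Z, s ∪ t ∈ Z)
    (U : Set ↥A) :
    (tau A Z).IsOpen U ↔
      ∀ y ∈ U, ∃ z ∈ Z, (y : Set X) ∩ z = ∅ ∧ BSet A (y : Set X) z ⊆ U := by
  constructor
  · intro h
    change TopologicalSpace.GenerateOpen _ U at h
    induction h with
    | basic S hS =>
        obtain ⟨x, hx, z, hz, hxz, rfl⟩ := hS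
        intro y hy
        refine ⟨z, hz, hy.2, fun w hw => ⟨hy.1.trans hw.1, hw.2⟩⟩
    | univ =>
        intro y _
        exact ⟨∅, hZfin ∅ finite_empty, by simp, by simp⟩
    | inter V W hV hW ihV ihW =>
        intro y hy
        obtain ⟨z1, hz1, hd1, hs1⟩ := ihV y hy.1
        obtain ⟨z2, hz2, hd2, hs2⟩ := ihW y hy.2
        refine ⟨z1 ∪ z2, hZun _ hz1 _ hz2, ?_, ?_⟩
        · rw [inter_union_distrib_left, hd1, hd2, union_empty]
        · intro w hw
          have h1 : (w : Set X) ∩ z1 = ∅ :=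
            subset_eq_empty ((inter_subset_inter_right _ subset_union_left).trans hw.2.subset) rfl
          have h2 : (w : Set X) ∩ z2 = ∅ :=
            subset_eq_empty ((inter_subset_inter_right _ subset_union_right).trans hw.2.subset) rfl
          exact ⟨hs1 ⟨hw.1, h1⟩, hs2 ⟨hw.1, h2⟩⟩
    | sUnion S hS ih =>
        intro y hy
        obtain ⟨T, hT, hyT⟩ := hy
        obtain ⟨z, hz, hd, hs⟩ := ih T hT y hyT
        exact ⟨z, hz, hd, fun w hw => ⟨T, hT, hs hw⟩⟩
  · intro h
    have hrw : U = ⋃₀ {S | (∃ x ∈ A, ∃ z ∈ Z, x ∩ z = ∅ ∧ S = BSet A x z) ∧ S ⊆ U} := by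
      ext y
      constructor
      · intro hy
        obtain ⟨z, hz, hd, hs⟩ := h y hy
        exact ⟨BSet A (y : Set X) z, ⟨⟨(y : Set X), y.2, z, hz, hd, rfl⟩, hs⟩,
          Subset.rfl, hd⟩
      · rintro ⟨S, ⟨_, hSU⟩, hyS⟩
        exact hSU hyS
    rw [hrw]
    exact TopologicalSpace.GenerateOpen.sUnion _
      (fun S hS => TopologicalSpace.GenerateOpen.basic _ hS.1)

/-- Theorem 3.9: if `Z` and `A` are bornologies on `X` with `A ⊆ Z` or
`A = P(X)`, then `(A, τ_A[Z])` is a P-space iff for every sequence `(A_n)` of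
non-empty subfamilies of `A \ {∅}` for which each set
`C_n = {z ∈ Z : ∀ x ∈ A_n, x ∩ z ≠ ∅}` is non-empty, the intersection
`⋂ n, C_n` is non-empty. -/
theorem tau_isPSpace_iff_combinatorial {X : Type*} [Infinite X] (A Z : Set (Set X))
    (hZfin : ∀ s : Set X, s.Finite → s ∈ Z)
    (hZdown : ∀ s t : Set X, s ⊆ t → t ∈ Z → s ∈ Z)
    (hZun : ∀ s ∈ Z, ∀ t ∈ Z, s ∪ t ∈ Z)
    (hAfin : ∀ s : Set X, s.Finite → s ∈ A)
    (hAdown : ∀ s t : Set X, s ⊆ t → t ∈ A → s ∈ A)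
    (hAun : ∀ s ∈ A, ∀ t ∈ A, s ∪ t ∈ A)
    (hAZ : A ⊆ Z ∨ A = Set.univ) :
    IsPSpace (tau A Z) ↔
      ∀ As : ℕ → Set (Set X),
        (∀ n, (As n).Nonempty ∧ As n ⊆ A \ {∅}) →
        (∀ n, {z ∈ Z | ∀ x ∈ As n, x ∩ z ≠ ∅}.Nonempty) →
        (⋂ n, {z ∈ Z | ∀ x ∈ As n, x ∩ z ≠ ∅}).Nonempty := by
  constructor
  · -- P-space ⇒ combinatorial
    intro hP As hAs hC
    set C : ℕ → Set (Set X) := fun n => {z ∈ Z | ∀ x ∈ As n, x ∩ z ≠ ∅} with hCdef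
    set U : ℕ → Set ↥A := fun n => {y : ↥A | ∃ z ∈ C n, (y : Set X) ∩ z = ∅} with hUdef
    have hUopen : ∀ n, (tau A Z).IsOpen (U n) := by
      intro n
      rw [isOpen_tau_iff A Z hZfin hZun]
      rintro y ⟨z, hzC, hyz⟩
      exact ⟨z, hzC.1, hyz, fun w hw => ⟨z, hzC, hw.2⟩⟩
    have hIopen := hP U hUopen
    rw [isOpen_tau_iff A Z hZfin hZun] at hIopen
    have he : (⟨∅, hAfin ∅ finite_empty⟩ : ↥A) ∈ ⋂ n, U n := by
      rw [mem_iInter]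
      intro n
      obtain ⟨z, hz⟩ := hC n
      exact ⟨z, hz, by simp⟩
    obtain ⟨z, hz, -, hsub⟩ := hIopen _ he
    refine ⟨z, ?_⟩
    rw [mem_iInter]
    intro n
    refine ⟨hz, fun x hx hxz => ?_⟩
    have hxA : x ∈ A := ((hAs n).2 hx).1
    have hmem : (⟨x, hxA⟩ : ↥A) ∈ BSet A (∅ : Set X) z := ⟨empty_subset _, hxz⟩
    have := hsub hmem
    rw [mem_iInter] at this
    obtain ⟨z', hz'C, hxz'⟩ := this n
    exact hz'C.2 x hx hxz'
  · -- combinatorial ⇒ P-space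
    intro hcomb U hU
    rw [isOpen_tau_iff A Z hZfin hZun]
    intro y hy
    by_cases hyuniv : (y : Set X) = univ
    · -- y = X is isolated
      refine ⟨∅, hZfin ∅ finite_empty, by simp, fun w hw => ?_⟩
      have : (w : Set X) = (y : Set X) := by
        rw [hyuniv]
        exact eq_univ_of_univ_subset (hyuniv ▸ hw.1)
      have hwy : w = y := Subtype.ext this
      rwa [hwy]
    · obtain ⟨p, hp⟩ := (ne_univ_iff_exists_notMem _).mp hyuniv
      -- neighborhoods witnesses for each n
      have hnbhd : ∀ n, ∃ z ∈ Z, (y : Set X) ∩ z = ∅ ∧ BSet A (y : Set X) z ⊆ U n := by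
        intro n
        have := (isOpen_tau_iff A Z hZfin hZun (U n)).mp (hU n)
        exact this y (by have := mem_iInter.mp hy n; exact this)
      set As : ℕ → Set (Set X) := fun n =>
        insert ({p} : Set X)
          {s : Set X | s ∈ A ∧ s ≠ ∅ ∧ s ∩ (y : Set X) = ∅ ∧
            ∀ w : ↥A, (w : Set X) = (y : Set X) ∪ s → w ∉ U n} with hAsdef
      have hAs1 : ∀ n, (As n).Nonempty ∧ As n ⊆ A \ {∅} := by
        intro n
        refine ⟨⟨{p}, mem_insert _ _⟩, ?_⟩
        rintro s (rfl | hs)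
        · exact ⟨hAfin _ (finite_singleton p), by simp⟩
        · exact ⟨hs.1, hs.2.1⟩
      have hAs2 : ∀ n, {z ∈ Z | ∀ x ∈ As n, x ∩ z ≠ ∅}.Nonempty := by
        intro n
        obtain ⟨z, hz, hyz, hsub⟩ := hnbhd n
        refine ⟨z ∪ {p}, hZun _ hz _ (hZfin _ (finite_singleton p)), ?_⟩
        rintro s (rfl | hs)
        · intro hps
          have : p ∈ ({p} : Set X) ∩ (z ∪ {p}) := ⟨rfl, Or.inr rfl⟩
          rw [hps] at this
          exact this
        · intro hsz
          have hszz : s ∩ z = ∅ :=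
            subset_eq_empty ((inter_subset_inter_right _ subset_union_left).trans hsz.subset) rfl
          have hwA : (y : Set X) ∪ s ∈ A := hAun _ y.2 _ hs.1
          have hwB : (⟨(y : Set X) ∪ s, hwA⟩ : ↥A) ∈ BSet A (y : Set X) z := by
            refine ⟨subset_union_left, ?_⟩
            rw [union_inter_distrib_right, hyz, hszz, union_empty]
          exact hs.2.2.2 _ rfl (hsub hwB)
      obtain ⟨z, hzmem⟩ := hcomb As hAs1 hAs2
      rw [mem_iInter] at hzmem
      have hzZ : z ∈ Z := (hzmem 0).1
      refine ⟨z \ (y : Set X), hZdown _ _ diff_subset hzZ, ?_, ?_⟩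
      · ext q; simp (config := { contextual := true }) [not_or]
      · intro w hw
        rw [mem_iInter]
        intro n
        by_contra hwU
        set s : Set X := (w : Set X) \ (y : Set X) with hsdef
        have hsA : s ∈ A := hAdown _ _ diff_subset w.2
        have hsne : s ≠ ∅ := by
          intro h0
          have hwy : (w : Set X) = (y : Set X) := by
            apply Subset.antisymm _ hw.1
            intro q hq
            by_contra hqy
            have hqs : q ∈ s := ⟨hq, hqy⟩
            rw [h0] at hqs
            exact hqs
          rw [Subtype.ext hwy] at hwU
          exact hwU (mem_iInter.mp hy n)
        have hsy : s ∩ (y : Set X) = ∅ := diff_inter_self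
        have hsmem : s ∈ As n := by
          refine Or.inr ⟨hsA, hsne, hsy, ?_⟩
          intro w' hw' hw'U
          have : (w' : Set X) = (w : Set X) := by
            rw [hw', hsdef, union_diff_self, union_eq_self_of_subset_left hw.1]
          rw [Subtype.ext this] at hw'U
          exact hwU hw'U
        have hhit := (hzmem n).2 s hsmem
        apply hhit
        have : s ∩ z = s ∩ (z \ (y : Set X)) := by
          ext q
          simp only [mem_inter_iff, mem_diff, hsdef]
          tauto
        rw [this]
        exact subset_eq_empty (inter_subset_inter_left _ diff_subset) hw.2
end

section
/- The family τ₂[Z] = {V ⊆ 2^X : ∀ f ∈ V, ∃ z ∈ Z \ {∅}, [f↾z] ⊆ V}, where [p] = {g ∈ 2^X : p ⊆ g}, is a topology on 2^X finer than the product topology of the Cantor cube 2^X; moreover τ₂[Z] equals the product topology if and only if Z = [X]^{<ω}. -/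
open Set

/-- The cylinder `[f↾z] = {g : g agrees with f on z}`. -/
def cyl {X : Type*} (f : X → Bool) (z : Set X) : Set (X → Bool) :=
  {g | ∀ i ∈ z, g i = f i}
/-- The family `τ₂[Z]`. -/
def tau2Fam {X : Type*} (Z : Set (Set X)) : Set (Set (X → Bool)) :=
  {V | ∀ f ∈ V, ∃ z ∈ Z, z ≠ ∅ ∧ cyl f z ⊆ V}

lemma cyl_isOpen {X : Type*} (f : X → Bool) {z : Set X} (hz : z.Finite) :
    IsOpen (cyl f z) := by
  have : cyl f z = ⋂ i ∈ z, (fun g : X → Bool => g i) ⁻¹' {f i} := by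
    ext g; simp [cyl]
  rw [this]
  exact hz.isOpen_biInter fun i _ => (continuous_apply i).isOpen_preimage _ (isOpen_discrete _)

lemma open_mem_tau2 {X : Type*} [Infinite X] {Z : Set (Set X)}
    (hZfin : ∀ s : Set X, s.Finite → s ∈ Z)
    (S : Set (X → Bool)) (hS : IsOpen S) : S ∈ tau2Fam Z := by
  intro f hf
  obtain ⟨I, u, hu, hsub⟩ := isOpen_pi_iff.mp hS f hf
  obtain ⟨x₀⟩ : Nonempty X := inferInstance
  refine ⟨(I : Set X) ∪ {x₀}, hZfin _ ((I.finite_toSet).union (finite_singleton _)), ?_, ?_⟩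
  · intro h
    exact absurd (h ▸ (mem_union_right _ rfl : x₀ ∈ (I : Set X) ∪ {x₀})) (notMem_empty _)
  · intro g hg
    apply hsub
    intro i hi
    have : g i = f i := hg i (Or.inl hi)
    rw [this]
    exact (hu i hi).2

/-- `τ₂[Z]` is a topology on `2^X` finer than the product topology of the Cantor
cube, and it equals the product topology iff `Z = [X]^{<ω}`. -/
theorem tau2Fam_topology_finer {X : Type*} [Infinite X] (Z : Set (Set X))
    (hZfin : ∀ s : Set X, s.Finite → s ∈ Z)
    (hZun : ∀ s ∈ Z, ∀ t ∈ Z, s ∪ t ∈ Z) :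
    (Set.univ ∈ tau2Fam Z ∧
      (∀ S : Set (Set (X → Bool)), S ⊆ tau2Fam Z → ⋃₀ S ∈ tau2Fam Z) ∧
      (∀ U ∈ tau2Fam Z, ∀ V ∈ tau2Fam Z, U ∩ V ∈ tau2Fam Z)) ∧
    (∀ S : Set (X → Bool), IsOpen S → S ∈ tau2Fam Z) ∧
    (tau2Fam Z = {S : Set (X → Bool) | IsOpen S} ↔ Z = {s : Set X | s.Finite}) := by
  obtain ⟨x₀⟩ : Nonempty X := inferInstance
  refine ⟨⟨?_, ?_, ?_⟩, open_mem_tau2 hZfin, ?_, ?_⟩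
  · -- univ
    intro f _
    exact ⟨{x₀}, hZfin _ (finite_singleton _), singleton_ne_empty _, subset_univ _⟩
  · -- sUnion
    intro S hS f hf
    obtain ⟨V, hVS, hfV⟩ := hf
    obtain ⟨z, hz, hzne, hsub⟩ := hS hVS f hfV
    exact ⟨z, hz, hzne, hsub.trans (subset_sUnion_of_mem hVS)⟩
  · -- inter
    rintro U hU V hV f ⟨hfU, hfV⟩
    obtain ⟨z₁, hz₁, hz₁ne, hsub₁⟩ := hU f hfU
    obtain ⟨z₂, hz₂, _, hsub₂⟩ := hV f hfV
    refine ⟨z₁ ∪ z₂, hZun _ hz₁ _ hz₂, ?_, ?_⟩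
    · intro h
      exact hz₁ne (subset_empty_iff.mp (h ▸ subset_union_left))
    · intro g hg
      exact ⟨hsub₁ fun i hi => hg i (Or.inl hi), hsub₂ fun i hi => hg i (Or.inr hi)⟩
  · -- forward of iff
    intro hEq
    ext z
    simp only [mem_setOf_eq]
    constructor
    · intro hz
      by_contra hinf
      have hzne : z ≠ ∅ := by rintro rfl; exact hinf finite_empty
      -- cyl (const false) z ∈ tau2Fam Z
      set f₀ : X → Bool := fun _ => false with hf₀
      have hmem : cyl f₀ z ∈ tau2Fam Z := by
        intro g hg
        refine ⟨z, hz, hzne, ?_⟩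
        intro h hh i hi
        rw [hh i hi, hg i hi]
      have hopen : IsOpen (cyl f₀ z) := by rw [hEq] at hmem; exact hmem
      classical
      obtain ⟨I, u, hu, hsub⟩ := isOpen_pi_iff.mp hopen f₀ (fun i _ => rfl)
      have hns : ¬ z ⊆ (I : Set X) := fun h => hinf (I.finite_toSet.subset h)
      obtain ⟨i₀, hi₀z, hi₀I⟩ := Set.not_subset.mp hns
      set g : X → Bool := fun i => if i = i₀ then true else f₀ i with hg
      have hgI : g ∈ (I : Set X).pi u := by
        intro i hi
        have : g i = f₀ i := if_neg (by rintro rfl; exact hi₀I hi)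
        rw [this]; exact (hu i hi).2
      have := hsub hgI i₀ hi₀z
      simp [g, f₀] at this
    · exact hZfin z
  · -- backward of iff
    intro hZ
    ext V
    simp only [mem_setOf_eq]
    constructor
    · intro hV
      rw [isOpen_iff_forall_mem_open]
      intro f hf
      obtain ⟨z, hz, _, hsub⟩ := hV f hf
      have hzfin : z.Finite := by rw [hZ] at hz; exact hz
      exact ⟨cyl f z, hsub, cyl_isOpen f hzfin, fun i _ => rfl⟩
    · exact open_mem_tau2 hZfin V
end

section
/- If Z is a bornology on X, then (P(X), τ_P[Z]) is a P-space if and only if 2^X[Z] is a P-space. -/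
open Set

/-- The topology `τ₂[Z]` on `2^X`, generated by the cylinders `[f↾z]` for
nonempty `z ∈ Z`. -/
def tau2 {X : Type*} (Z : Set (Set X)) : TopologicalSpace (X → Bool) :=
  TopologicalSpace.generateFrom
    {S | ∃ (f : X → Bool) (z : Set X), z ∈ Z ∧ z ≠ ∅ ∧ S = cyl f z}
lemma tauP_nbhd {X : Type*} {Z : Set (Set X)}
    (hZfin : ∀ s : Set X, s.Finite → s ∈ Z)
    (hZun : ∀ s ∈ Z, ∀ t ∈ Z, s ∪ t ∈ Z)
    {U : Set (Set X)} (hU : (tauP Z).IsOpen U) :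
    ∀ y ∈ U, ∃ z ∈ Z, y ∩ z = ∅ ∧ {w : Set X | y ⊆ w ∧ w ∩ z = ∅} ⊆ U := by
  have hU' : TopologicalSpace.GenerateOpen
      {S | ∃ x z : Set X, z ∈ Z ∧ x ∩ z = ∅ ∧
        S = {y : Set X | x ⊆ y ∧ y ∩ z = ∅}} U := hU
  clear hU
  induction hU' with
  | basic S hS =>
      rintro y hy
      obtain ⟨x, z, hz, -, rfl⟩ := hS
      exact ⟨z, hz, hy.2, fun w hw => ⟨hy.1.trans hw.1, hw.2⟩⟩
  | univ =>
      intro y _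
      exact ⟨∅, hZfin ∅ finite_empty, by simp, fun _ _ => trivial⟩
  | inter U V hUo hVo ihU ihV =>
      intro y hy
      obtain ⟨z1, hz1, hd1, hs1⟩ := ihU y hy.1
      obtain ⟨z2, hz2, hd2, hs2⟩ := ihV y hy.2
      refine ⟨z1 ∪ z2, hZun _ hz1 _ hz2, ?_, ?_⟩
      · rw [inter_union_distrib_left, hd1, hd2, union_empty]
      · intro w hw
        have h1 : w ∩ z1 = ∅ :=
          eq_empty_of_subset_empty (hw.2 ▸ inter_subset_inter_right _ subset_union_left)
        have h2 : w ∩ z2 = ∅ :=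
          eq_empty_of_subset_empty (hw.2 ▸ inter_subset_inter_right _ subset_union_right)
        exact ⟨hs1 ⟨hw.1, h1⟩, hs2 ⟨hw.1, h2⟩⟩
  | sUnion S hS ih =>
      rintro y ⟨T, hT, hyT⟩
      obtain ⟨z, hz, hd, hs⟩ := ih T hT y hyT
      exact ⟨z, hz, hd, hs.trans (subset_sUnion_of_mem hT)⟩

lemma tau2_nbhd {X : Type*} [Infinite X] {Z : Set (Set X)}
    (hZfin : ∀ s : Set X, s.Finite → s ∈ Z)
    (hZun : ∀ s ∈ Z, ∀ t ∈ Z, s ∪ t ∈ Z)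
    {U : Set (X → Bool)} (hU : (tau2 Z).IsOpen U) :
    ∀ g ∈ U, ∃ z ∈ Z, z ≠ ∅ ∧ cyl g z ⊆ U := by
  have hU' : TopologicalSpace.GenerateOpen
      {S | ∃ (f : X → Bool) (z : Set X), z ∈ Z ∧ z ≠ ∅ ∧ S = cyl f z} U := hU
  clear hU
  induction hU' with
  | basic S hS =>
      rintro g hg
      obtain ⟨f, z, hz, hne, rfl⟩ := hS
      refine ⟨z, hz, hne, fun w hw i hi => (hw i hi).trans (hg i hi)⟩
  | univ =>
      intro g _
      have x0 : X := Classical.arbitrary X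
      exact ⟨{x0}, hZfin _ (finite_singleton x0), singleton_ne_empty x0,
        fun _ _ => trivial⟩
  | inter U V hUo hVo ihU ihV =>
      intro g hg
      obtain ⟨z1, hz1, hne1, hs1⟩ := ihU g hg.1
      obtain ⟨z2, hz2, hne2, hs2⟩ := ihV g hg.2
      refine ⟨z1 ∪ z2, hZun _ hz1 _ hz2, ?_, ?_⟩
      · intro h
        exact hne1 (eq_empty_of_subset_empty (h ▸ subset_union_left))
      · intro w hw
        exact ⟨hs1 fun i hi => hw i (Or.inl hi), hs2 fun i hi => hw i (Or.inr hi)⟩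
  | sUnion S hS ih =>
      rintro g ⟨T, hT, hgT⟩
      obtain ⟨z, hz, hne, hs⟩ := ih T hT g hgT
      exact ⟨z, hz, hne, hs.trans (subset_sUnion_of_mem hT)⟩

/-- If `Z` is a bornology on `X`, then `(P(X), τ_P[Z])` is a P-space iff
`2^X[Z]` is a P-space. -/
theorem tauP_isPSpace_iff_tau2 {X : Type*} [Infinite X] (Z : Set (Set X))
    (hZfin : ∀ s : Set X, s.Finite → s ∈ Z)
    (hZdown : ∀ s t : Set X, s ⊆ t → t ∈ Z → s ∈ Z)
    (hZun : ∀ s ∈ Z, ∀ t ∈ Z, s ∪ t ∈ Z) :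
    IsPSpace (tauP Z) ↔ IsPSpace (tau2 Z) := by
  -- Both conditions are equivalent to `Z` being closed under countable unions.
  have CUP : IsPSpace (tauP Z) → ∀ z : ℕ → Set X, (∀ n, z n ∈ Z) → (⋃ n, z n) ∈ Z := by
    intro hP z hz
    have hopen : ∀ n, (tauP Z).IsOpen {w : Set X | (∅ : Set X) ⊆ w ∧ w ∩ z n = ∅} :=
      fun n => TopologicalSpace.GenerateOpen.basic _ ⟨∅, z n, hz n, empty_inter _, rfl⟩
    have hI := hP _ hopen
    obtain ⟨w, hw, -, hs⟩ := tauP_nbhd hZfin hZun hI ∅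
      (mem_iInter.2 fun n => ⟨empty_subset _, empty_inter _⟩)
    refine hZdown _ _ (fun i hi => ?_) hw
    by_contra hiw
    have h1 : ({i} : Set X) ∈ {u : Set X | (∅ : Set X) ⊆ u ∧ u ∩ w = ∅} :=
      ⟨empty_subset _, by simp [singleton_inter_eq_empty.2 hiw]⟩
    obtain ⟨n, hin⟩ := mem_iUnion.1 hi
    have h2 := (mem_iInter.1 (hs h1) n).2
    rw [singleton_inter_eq_empty] at h2
    exact h2 hin
  have CU2 : IsPSpace (tau2 Z) → ∀ z : ℕ → Set X, (∀ n, z n ∈ Z) → (⋃ n, z n) ∈ Z := by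
    intro hP z hz
    have hopen : ∀ n, (tau2 Z).IsOpen (cyl (fun _ => false) (z n)) := by
      intro n
      by_cases hne : z n = ∅
      · have : cyl (fun _ : X => false) (z n) = univ := by
          ext g; simp [cyl, hne]
        rw [this]; exact TopologicalSpace.GenerateOpen.univ
      · exact TopologicalSpace.GenerateOpen.basic _ ⟨fun _ => false, z n, hz n, hne, rfl⟩
    have hI := hP _ hopen
    obtain ⟨w, hw, -, hs⟩ := tau2_nbhd hZfin hZun hI (fun _ => false)
      (mem_iInter.2 fun n i _ => rfl)
    refine hZdown _ _ (fun i hi => ?_) hw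
    by_contra hiw
    obtain ⟨n, hin⟩ := mem_iUnion.1 hi
    classical
    have h1 : Function.update (fun _ : X => false) i true ∈ cyl (fun _ : X => false) w := by
      intro j hj
      exact Function.update_of_ne (fun h : j = i => hiw (h ▸ hj)) _ _
    have h2 := mem_iInter.1 (hs h1) n i hin
    rw [Function.update_self] at h2
    simp at h2
  have PUP : (∀ z : ℕ → Set X, (∀ n, z n ∈ Z) → (⋃ n, z n) ∈ Z) → IsPSpace (tauP Z) := by
    intro hCU U hUo
    letI : TopologicalSpace (Set X) := tauP Z
    rw [show (tauP Z).IsOpen (⋂ n, U n) ↔ IsOpen (⋂ n, U n) from Iff.rfl,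
      isOpen_iff_forall_mem_open]
    intro y hy
    choose zz hzZ hzd hzs using fun n => tauP_nbhd hZfin hZun (hUo n) y (mem_iInter.1 hy n)
    have hyd : y ∩ ⋃ n, zz n = ∅ := by
      rw [inter_iUnion, iUnion_eq_empty]; exact hzd
    refine ⟨{w : Set X | y ⊆ w ∧ w ∩ ⋃ n, zz n = ∅}, ?_, ?_, ?_⟩
    · intro w hw
      refine mem_iInter.2 fun n => hzs n ⟨hw.1, ?_⟩
      exact eq_empty_of_subset_empty
        (hw.2 ▸ inter_subset_inter_right _ (subset_iUnion zz n))
    · exact TopologicalSpace.GenerateOpen.basic _ ⟨y, ⋃ n, zz n, hCU _ hzZ, hyd, rfl⟩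
    · exact ⟨subset_rfl, hyd⟩
  have PU2 : (∀ z : ℕ → Set X, (∀ n, z n ∈ Z) → (⋃ n, z n) ∈ Z) → IsPSpace (tau2 Z) := by
    intro hCU U hUo
    letI : TopologicalSpace (X → Bool) := tau2 Z
    rw [show (tau2 Z).IsOpen (⋂ n, U n) ↔ IsOpen (⋂ n, U n) from Iff.rfl,
      isOpen_iff_forall_mem_open]
    intro g hg
    choose zz hzZ hzne hzs using fun n => tau2_nbhd hZfin hZun (hUo n) g (mem_iInter.1 hg n)
    have hne : (⋃ n, zz n) ≠ ∅ := fun h => hzne 0 (iUnion_eq_empty.1 h 0)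
    refine ⟨cyl g (⋃ n, zz n), ?_, ?_, fun i _ => rfl⟩
    · intro w hw
      exact mem_iInter.2 fun n => hzs n (fun i hi => hw i (mem_iUnion.2 ⟨n, hi⟩))
    · exact TopologicalSpace.GenerateOpen.basic _ ⟨g, ⋃ n, zz n, hCU _ hzZ, hne, rfl⟩
  exact ⟨fun h => PU2 (CUP h), fun h => PUP (CU2 h)⟩
end

section
/- If Z is a bornology on X such that 2^X[Z] is a P-space, then Z is a σ-ideal. -/
open Set

/-- Key lemma: any generated-open set containing the constant-true function
contains a cylinder `cyl true w` with `w ∈ Z`. -/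
theorem exists_cyl_subset {X : Type*} (Z : Set (Set X))
    (hZfin : ∀ s : Set X, s.Finite → s ∈ Z)
    (hZun : ∀ s ∈ Z, ∀ t ∈ Z, s ∪ t ∈ Z)
    (O : Set (X → Bool))
    (hO : TopologicalSpace.GenerateOpen
      {S | ∃ (f : X → Bool) (z : Set X), z ∈ Z ∧ z ≠ ∅ ∧ S = cyl f z} O)
    (hmem : (fun _ => true) ∈ O) :
    ∃ w ∈ Z, cyl (fun _ => true) w ⊆ O := by
  induction hO with
  | basic S hS =>
      obtain ⟨f, z, hz, -, rfl⟩ := hS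
      refine ⟨z, hz, ?_⟩
      intro g hg i hi
      rw [hg i hi]
      exact hmem i hi
  | univ => exact ⟨∅, hZfin ∅ finite_empty, fun g _ => trivial⟩
  | inter S T hS hT ihS ihT =>
      obtain ⟨w₁, hw₁, hsub₁⟩ := ihS hmem.1
      obtain ⟨w₂, hw₂, hsub₂⟩ := ihT hmem.2
      refine ⟨w₁ ∪ w₂, hZun _ hw₁ _ hw₂, ?_⟩
      intro g hg
      exact ⟨hsub₁ (fun i hi => hg i (Or.inl hi)),
             hsub₂ (fun i hi => hg i (Or.inr hi))⟩
  | sUnion S hS ih =>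
      obtain ⟨t, ht, hmt⟩ := hmem
      obtain ⟨w, hw, hsub⟩ := ih t ht hmt
      exact ⟨w, hw, hsub.trans (subset_sUnion_of_mem ht)⟩

/-- If `Z` is a bornology on `X` and `2^X[Z]` is a P-space, then `Z` is a
σ-ideal. -/
theorem sigma_ideal_of_tau2_isPSpace {X : Type*} [Infinite X] (Z : Set (Set X))
    (hZfin : ∀ s : Set X, s.Finite → s ∈ Z)
    (hZdown : ∀ s t : Set X, s ⊆ t → t ∈ Z → s ∈ Z)
    (hZun : ∀ s ∈ Z, ∀ t ∈ Z, s ∪ t ∈ Z)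
    (hP : IsPSpace (tau2 Z)) :
    ∀ f : ℕ → Set X, (∀ n, f n ∈ Z) → (⋃ n, f n) ∈ Z := by
  intro f hf
  classical
  obtain ⟨x₀⟩ : Nonempty X := inferInstance
  set z : ℕ → Set X := fun n => {x₀} ∪ f n with hzdef
  have hzZ : ∀ n, z n ∈ Z := fun n =>
    hZun _ (hZfin {x₀} (finite_singleton _)) _ (hf n)
  have hzne : ∀ n, z n ≠ ∅ := fun n =>
    Set.Nonempty.ne_empty ⟨x₀, Or.inl rfl⟩
  set U : ℕ → Set (X → Bool) := fun n => cyl (fun _ => true) (z n) with hUdef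
  have hUopen : ∀ n, (tau2 Z).IsOpen (U n) := fun n =>
    TopologicalSpace.GenerateOpen.basic _ ⟨fun _ => true, z n, hzZ n, hzne n, rfl⟩
  have hIopen : TopologicalSpace.GenerateOpen
      {S | ∃ (g : X → Bool) (w : Set X), w ∈ Z ∧ w ≠ ∅ ∧ S = cyl g w}
      (⋂ n, U n) := hP U hUopen
  have hmem : (fun _ => true) ∈ ⋂ n, U n := by
    intro s hs
    obtain ⟨n, rfl⟩ := mem_range.mp hs
    intro i _
    rfl
  obtain ⟨w, hw, hsub⟩ := exists_cyl_subset Z hZfin hZun _ hIopen hmem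
  refine hZdown _ w ?_ hw
  intro i hi
  obtain ⟨n, hin⟩ := mem_iUnion.mp hi
  by_contra hiw
  set g : X → Bool := fun j => if j = i then false else true with hgdef
  have hg : g ∈ cyl (fun _ => true) w := by
    intro j hj
    have : j ≠ i := fun h => hiw (h ▸ hj)
    simp [hgdef, this]
  have hgU : g ∈ U n := mem_iInter.mp (hsub hg) n
  have : g i = true := hgU i (Or.inr hin)
  simp [hgdef] at this
end

section
/- In ZF, for every infinite set X, the space (P(X), τ_P[[X]^{<ω}]) is not a P-space; consequently the Cantor cube 2^X (with the product topology) is not a P-space. -/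
open Set

/-! Fix distinct points `a 0, a 1, …` of `X`. In both spaces every neighbourhood of `∅` only
constrains finitely many coordinates, so `{a n} → ∅`; yet each `{y | a n ∉ y}` is an open
neighbourhood of `∅` missing `{a n}`. In a P-space their intersection would be an open
neighbourhood of `∅`, hence contain some `{a n}`, a contradiction. -/

open Filter Topology

theorem not_isPSpace_of_tendsto {α : Type*} [TopologicalSpace α] {p : α} {q : ℕ → α}
    {U : ℕ → Set α} (hq : Tendsto q atTop (𝓝 p)) (hU : ∀ n, IsOpen (U n))
    (hpU : ∀ n, p ∈ U n) (hqU : ∀ n, q n ∉ U n) : ¬ IsPSpace ‹TopologicalSpace α› := by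
  intro hP
  have hpq : ∀ᶠ n in atTop, q n ∈ ⋂ m, U m :=
    hq (IsOpen.mem_nhds (hP U hU) (mem_iInter.mpr hpU))
  obtain ⟨n, hn⟩ := hpq.exists
  exact hqU n (mem_iInter.mp hn n)

section tauP

variable {X : Type*} {Z : Set (Set X)}

theorem tauP_isOpen_setOf_inter_eq_empty {z : Set X} (hz : z ∈ Z) :
    IsOpen[tauP Z] {y | y ∩ z = ∅} :=
  TopologicalSpace.GenerateOpen.basic _ ⟨∅, z, hz, empty_inter z, by simp⟩

theorem tauP_exists_subset_of_isOpen_of_empty_mem (hZ₀ : ∅ ∈ Z)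
    (hZ : ∀ z₁ ∈ Z, ∀ z₂ ∈ Z, z₁ ∪ z₂ ∈ Z) {S : Set (Set X)} (hS : IsOpen[tauP Z] S)
    (hS₀ : ∅ ∈ S) : ∃ z ∈ Z, {y | y ∩ z = ∅} ⊆ S := by
  induction hS with
  | basic S hSmem =>
    obtain ⟨x, z, hz, -, rfl⟩ := hSmem
    obtain rfl : x = ∅ := subset_empty_iff.mp hS₀.1
    exact ⟨z, hz, fun y hy => ⟨empty_subset y, hy⟩⟩
  | univ => exact ⟨∅, hZ₀, subset_univ _⟩
  | inter S T _ _ ihS ihT =>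
    obtain ⟨z₁, hz₁, h₁⟩ := ihS hS₀.1
    obtain ⟨z₂, hz₂, h₂⟩ := ihT hS₀.2
    refine ⟨z₁ ∪ z₂, hZ z₁ hz₁ z₂ hz₂, fun y hy => ?_⟩
    obtain ⟨hy₁, hy₂⟩ := union_empty_iff.mp ((inter_union_distrib_left y z₁ z₂).symm.trans hy)
    exact ⟨h₁ hy₁, h₂ hy₂⟩
  | sUnion _ _ ih =>
    obtain ⟨T, hT, hT₀⟩ := hS₀
    obtain ⟨z, hz, h⟩ := ih T hT hT₀
    exact ⟨z, hz, h.trans (subset_sUnion_of_mem hT)⟩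

end tauP

theorem tendsto_singleton_tauP_finite {X : Type*} {a : ℕ → X} (ha : a.Injective) :
    Tendsto (fun n => ({a n} : Set X)) atTop (@nhds _ (tauP {s | s.Finite}) ∅) := by
  let := tauP {s : Set X | s.Finite}
  refine tendsto_nhds.mpr fun S hS hS₀ => ?_
  obtain ⟨z, hz, hzS⟩ := tauP_exists_subset_of_isOpen_of_empty_mem finite_empty
    (fun _ h₁ _ h₂ => h₁.union h₂) hS hS₀
  rw [← Nat.cofinite_eq_atTop]
  filter_upwards [ha.tendsto_cofinite.eventually hz.eventually_cofinite_notMem] with n hn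
  exact hzS (singleton_inter_eq_empty.mpr hn)

theorem tendsto_decide_eq_nhds_false {X : Type*} [DecidableEq X] {a : ℕ → X} (ha : a.Injective) :
    Tendsto (fun n x => decide (x = a n)) atTop (𝓝 fun _ => false) := by
  refine tendsto_pi_nhds.mpr fun x => ?_
  rw [nhds_discrete, tendsto_pure, ← Nat.cofinite_eq_atTop]
  filter_upwards [ha.tendsto_cofinite.eventually (eventually_cofinite_ne x)] with n hn
  simpa using Ne.symm hn

/-- For every infinite `X`, the space `(P(X), τ_P[[X]^{<ω}])` is not a P-space,
and the Cantor cube `2^X` (with the product topology) is not a P-space. -/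
theorem tauP_finite_not_pspace {X : Type*} [Infinite X] :
    ¬ IsPSpace (tauP {s : Set X | s.Finite}) ∧
    ¬ IsPSpace (inferInstance : TopologicalSpace (X → Bool)) := by
  let a := Infinite.natEmbedding X
  constructor
  · let := tauP {s : Set X | s.Finite}
    exact not_isPSpace_of_tendsto (U := fun n => {y | y ∩ {a n} = ∅})
      (tendsto_singleton_tauP_finite a.injective)
      (fun n => tauP_isOpen_setOf_inter_eq_empty (finite_singleton (a n)))
      (fun n => empty_inter _) (fun n => by simp)
  · classical
    exact not_isPSpace_of_tendsto (U := fun n => {f | f (a n) = false})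
      (tendsto_decide_eq_nhds_false a.injective)
      (fun n => (isOpen_discrete {false}).preimage
        (continuous_apply (A := fun _ => Bool) (a n)))
      (fun n => rfl) (fun n => by simp)
end
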